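/- arXiv:1801.02654 — 3 statements merged into one kernel-verified Lean document; each statement's English description precedes it below -/
import Mathlib

section
/- For a k×n matrix M over a commutative ring and a (k-2)-subset I of column indices with I disjoint from {a,b,c,d} where a < b < c < d, the maximal minors satisfy p_{Iac} p_{Ibd} = p_{Iab} p_{Icd} + p_{Iad} p_{Ibc}, where p_{Is t} denotes the k×k minor on columns I ∪ {s,t} (with columns in the indicated order, using the sign convention that transposing two column indices negates the minor). -/
/-!
The `m + 3` columns `e, b, c, d` of `M` live in `R^(m+2)`, so they satisfy the Cramer syzygy
`∑ⱼ (-1)^j (minor omitting column j) • column j = 0`. Applying the linear functional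
`x ↦ det [e | a | x]` kills the columns of `e` (repeated column) and leaves
`(-1)^m (p a b * p c d - p a c * p b d + p a d * p b c) = 0`.
-/

open Matrix

theorem Fin.snoc_comp_last_succAbove {α : Type*} {n : ℕ} (f : Fin n → α) (x : α) :
    (Fin.snoc f x : Fin (n + 1) → α) ∘ (Fin.last n).succAbove = f := by
  rw [Fin.succAbove_last]
  exact Fin.snoc_comp_castSucc

theorem Fin.snoc_comp_castSucc_succAbove {α : Type*} {n : ℕ} (f : Fin (n + 1) → α) (x : α)
    (i : Fin (n + 1)) :
    (Fin.snoc f x : Fin (n + 2) → α) ∘ i.castSucc.succAbove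
      = Fin.snoc (f ∘ i.succAbove) x := by
  funext r
  refine Fin.lastCases ?_ (fun j => ?_) r
  · simp [Fin.succAbove_castSucc_of_le _ _ (Fin.le_last i)]
  · simp [Fin.castSucc_succAbove_castSucc]

namespace Matrix

variable {R : Type*} [CommRing R]

theorem mulVec_signed_minors_eq_zero {k : ℕ} (A : Matrix (Fin k) (Fin (k + 1)) R) :
    A *ᵥ (fun j => (-1) ^ (j : ℕ) * (A.submatrix id j.succAbove).det) = 0 := by
  ext l
  have hB : (of (vecCons (A l) A)).det = 0 :=
    det_zero_of_row_eq (Fin.succ_ne_zero l).symm rfl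
  rw [det_succ_row_zero] at hB
  rw [Pi.zero_apply, ← hB, mulVec, dotProduct]
  refine Finset.sum_congr rfl fun j _ => ?_
  rw [mul_left_comm, ← mul_assoc]
  rfl

theorem sum_signed_minors_mul_map_col_eq_zero {k : ℕ} (A : Matrix (Fin k) (Fin (k + 1)) R)
    (f : (Fin k → R) →ₗ[R] R) :
    ∑ j : Fin (k + 1), (-1) ^ (j : ℕ) * (A.submatrix id j.succAbove).det * f (fun i => A i j)
      = 0 := by
  have h := congrArg f (mulVec_signed_minors_eq_zero A)
  simp only [mulVec_eq_sum, op_smul_eq_smul, map_sum, map_smul, smul_eq_mul, map_zero] at h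
  rw [← h]
  rfl

theorem submatrix_snoc_updateCol_last {ι κ α : Type*} [DecidableEq ι] {k : ℕ}
    (M : Matrix ι κ α) (g : Fin k → κ) (s t : κ) :
    (M.submatrix id (Fin.snoc g s)).updateCol (Fin.last k) (fun i => M i t)
      = M.submatrix id (Fin.snoc g t) := by
  ext i j
  refine Fin.lastCases ?_ (fun j => ?_) j <;> simp

end Matrix

theorem plucker_relation_general_general {R : Type*} [CommRing R] {m n : ℕ}
    (M : Matrix (Fin (m + 2)) (Fin n) R)
    (e : Fin m → Fin n)
    (a b c d : Fin n)
    (p : Fin n → Fin n → R)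
    (hp : ∀ s t, p s t = (M.submatrix id (Fin.snoc (Fin.snoc e s) t)).det) :
    p a c * p b d = p a b * p c d + p a d * p b c := by
  set f := LinearMap.proj (Fin.last (m + 1)) ∘ₗ
    cramer (M.submatrix id (Fin.snoc (Fin.snoc e a) a))
  have hf : ∀ t, f (fun i => M i t) = p a t := fun t => by
    simp [f, cramer_apply, submatrix_snoc_updateCol_last, hp]
  have hp_e : ∀ s j, p s (e j) = 0 := fun s j => by
    rw [hp]
    exact det_zero_of_column_eq (Fin.castSucc_lt_last j.castSucc).ne (fun i => by simp)
  have key := sum_signed_minors_mul_map_col_eq_zero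
    (M.submatrix id (Fin.snoc (Fin.snoc (Fin.snoc e b) c) d)) f
  simp only [Fin.sum_univ_castSucc, submatrix_submatrix, Function.comp_id, submatrix_apply, id,
    Fin.snoc_castSucc, Fin.snoc_last, Fin.snoc_comp_castSucc_succAbove,
    Fin.snoc_comp_last_succAbove, hf, hp_e, mul_zero, Finset.sum_const_zero, zero_add,
    ← hp] at key
  have hsyz : (-1) ^ m * (p a b * p c d - p a c * p b d + p a d * p b c) = 0 := by
    simp only [Fin.val_castSucc, Fin.val_last] at key
    linear_combination key
  linear_combination -neg_one_pow_mul_eq_zero_iff.mp hsyz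

theorem plucker_relation_general {R : Type*} [CommRing R] {m n : ℕ}
    (M : Matrix (Fin (m + 2)) (Fin n) R)
    (e : Fin m → Fin n) (he : Function.Injective e)
    (a b c d : Fin n) (hab : a < b) (hbc : b < c) (hcd : c < d)
    (hdisj : ∀ i, e i ≠ a ∧ e i ≠ b ∧ e i ≠ c ∧ e i ≠ d)
    (p : Fin n → Fin n → R)
    (hp : ∀ s t, p s t = (M.submatrix id (Fin.snoc (Fin.snoc e s) t)).det) :
    p a c * p b d = p a b * p c d + p a d * p b c :=
  plucker_relation_general_general M e a b c d p hp
end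

section
/- Every maximal collection of pairwise weakly separated k-subsets of {1,...,n} contains all n interval (cyclically consecutive) k-subsets of {1,...,n}. -/
/-! An interval `I` is weakly separated from every subset `J` of `{1, …, n}`: the elements of
`I \ J` lie in `I` and those of `J \ I` in its complement, which is again cyclically consecutive,
so the two can never alternate around the circle. As `I` has `k` elements, maximality of the
collection forces `I` into it. -/

/-- Elements are in cyclic order (mod n) if some rotation of the list is strictly increasing. -/
def CyclicallyOrdered (l : List ℕ) : Prop := ∃ k, (l.rotate k).Chain' (· < ·)

/-- Two subsets `I, J` of `{1,...,n}` are weakly separated (non-crossing) if there do not exist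
`s < t < u < v` in cyclic order with `s, u ∈ I \ J` and `t, v ∈ J \ I`. -/
def WeaklySeparated (I J : Finset ℕ) : Prop :=
  ¬ ∃ s t u v : ℕ, CyclicallyOrdered [s, t, u, v] ∧
    s ∈ I ∧ s ∉ J ∧ u ∈ I ∧ u ∉ J ∧ t ∈ J ∧ t ∉ I ∧ v ∈ J ∧ v ∉ I

/-- A maximal collection of pairwise weakly separated `k`-subsets of `{1,...,n}`. -/
def MaxWS (n k : ℕ) (C : Set (Finset ℕ)) : Prop :=
  (∀ I ∈ C, I ⊆ Finset.Icc 1 n ∧ I.card = k) ∧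
  (∀ I ∈ C, ∀ J ∈ C, WeaklySeparated I J) ∧
  (∀ K : Finset ℕ, K ⊆ Finset.Icc 1 n → K.card = k →
      (∀ I ∈ C, WeaklySeparated K I) → K ∈ C)

/-- An interval `k`-subset of `{1,...,n}`: `k` cyclically consecutive elements. -/
def IntervalSubset (n k : ℕ) (I : Finset ℕ) : Prop :=
  ∃ i, I = (Finset.range k).image (fun t => (i + t) % n + 1)

def cyclicInterval (n k i : ℕ) : Finset ℕ :=
  (Finset.range k).image fun t => (i + t) % n + 1

lemma Nat.mod_cases_of_lt_two_mul {a n : ℕ} (h : a < 2 * n) :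
    a < n ∧ a % n = a ∨ n ≤ a ∧ a % n = a - n := by
  rcases Nat.lt_or_ge a n with ha | ha
  · exact .inl ⟨ha, Nat.mod_eq_of_lt ha⟩
  · exact .inr ⟨ha, by rw [Nat.mod_eq_sub_mod ha, Nat.mod_eq_of_lt (by omega)]⟩

lemma CyclicallyOrdered.four_cases {s t u v : ℕ} (h : CyclicallyOrdered [s, t, u, v]) :
    (s < t ∧ t < u ∧ u < v) ∨ (t < u ∧ u < v ∧ v < s) ∨
      (u < v ∧ v < s ∧ s < t) ∨ (v < s ∧ s < t ∧ t < u) := by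
  obtain ⟨m, hm⟩ := h
  rw [← List.rotate_mod] at hm
  have hm4 : m % 4 < 4 := Nat.mod_lt m (by norm_num)
  interval_cases m % 4 <;> simp_all [List.Chain']

section cyclicInterval

variable {n k i : ℕ}

/-- The two disjuncts are the parts of the interval before and after it wraps past `n`. -/
lemma mem_cyclicInterval (hk : k ≤ n) {x : ℕ} :
    x ∈ cyclicInterval n k i ↔
      1 ≤ x ∧ x ≤ n ∧ (i % n < x ∧ x ≤ i % n + k ∨ x + n ≤ i % n + k) := by
  rcases Nat.eq_zero_or_pos n with rfl | hn
  · obtain rfl : k = 0 := by omega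
    simp only [cyclicInterval, Finset.range_zero, Finset.image_empty, Finset.notMem_empty,
      false_iff]
    omega
  have hr := Nat.mod_lt i hn
  simp only [cyclicInterval, Finset.mem_image, Finset.mem_range, ← Nat.mod_add_mod i]
  generalize i % n = r at *
  constructor
  · rintro ⟨t, ht, rfl⟩
    rcases Nat.mod_cases_of_lt_two_mul (a := r + t) (n := n) (by omega) with h | h <;>
      omega
  · rintro ⟨hx1, hxn, ⟨hrx, hxk⟩ | hwrap⟩
    · exact ⟨x - 1 - r, by omega, by rw [Nat.mod_eq_of_lt (by omega)]; omega⟩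
    · refine ⟨x - 1 + n - r, by omega, ?_⟩
      rw [show r + (x - 1 + n - r) = x - 1 + n by omega, Nat.add_mod_right,
        Nat.mod_eq_of_lt (by omega)]
      omega

lemma cyclicInterval_subset_Icc (hk : k ≤ n) : cyclicInterval n k i ⊆ Finset.Icc 1 n := by
  intro x hx
  obtain ⟨h1, hn, -⟩ := (mem_cyclicInterval hk).mp hx
  exact Finset.mem_Icc.mpr ⟨h1, hn⟩

lemma card_cyclicInterval (hk : k ≤ n) : (cyclicInterval n k i).card = k := by
  rw [cyclicInterval, Finset.card_image_of_injOn, Finset.card_range]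
  intro a ha b hb hab
  simp only [Finset.coe_range, Set.mem_Iio] at ha hb
  have mem_Ico {c : ℕ} (hc : c < k) : i + c ∈ Finset.Ico i (i + n) :=
    Finset.mem_Ico.mpr ⟨by omega, by omega⟩
  have := Nat.mod_injOn_Ico i n (mem_Ico ha) (mem_Ico hb) (Nat.add_right_cancel hab)
  omega

lemma weaklySeparated_cyclicInterval (hk : k ≤ n) {J : Finset ℕ} (hJ : J ⊆ Finset.Icc 1 n) :
    WeaklySeparated (cyclicInterval n k i) J := by
  rintro ⟨s, t, u, v, hcyc, hsI, -, huI, -, htJ, htI, hvJ, hvI⟩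
  have ht := Finset.mem_Icc.mp (hJ htJ)
  have hv := Finset.mem_Icc.mp (hJ hvJ)
  rw [mem_cyclicInterval hk] at hsI huI htI hvI
  have hord := hcyc.four_cases
  generalize i % n = r at *
  omega

end cyclicInterval

theorem maximal_contains_intervals (n k : ℕ) (hk : k ≤ n) (C : Set (Finset ℕ))
    (hC : MaxWS n k C) (I : Finset ℕ) (hI : IntervalSubset n k I) : I ∈ C := by
  obtain ⟨i, rfl⟩ := hI
  exact hC.2.2 _ (cyclicInterval_subset_Icc hk) (card_cyclicInterval hk)
    fun J hJ => weaklySeparated_cyclicInterval hk (hC.1 J hJ).1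
end

section
/- Let I = {i,...,j} ∪ {l,...,m} be a double-interval k-subset (with the two intervals disjoint and nonadjacent cyclically). Then the 'shifted' double-interval subsets J₁ with label i⋯(j−1),(l−1)⋯m and J₂ with label (i+1)⋯j, l⋯(m+1) are crossing (not weakly separated) with each other. -/
/-! The crossing is witnessed by `i < j < l - 1 < m + 1`: the endpoints `i` and `l - 1` lie only in
`J₁`, while `j` and `m + 1` lie only in `J₂`. -/

theorem cyclicallyOrdered_of_lt {s t u v : ℕ} (hst : s < t) (htu : t < u) (huv : u < v) :
    CyclicallyOrdered [s, t, u, v] :=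
  ⟨0, .cons_cons hst (.cons_cons htu (.cons_cons huv (.singleton v)))⟩

theorem not_weaklySeparated_of_lt {I J : Finset ℕ} {s t u v : ℕ}
    (hst : s < t) (htu : t < u) (huv : u < v)
    (hs : s ∈ I \ J) (hu : u ∈ I \ J) (ht : t ∈ J \ I) (hv : v ∈ J \ I) :
    ¬ WeaklySeparated I J := by
  rw [Finset.mem_sdiff] at hs hu ht hv
  exact not_not_intro
    ⟨s, t, u, v, cyclicallyOrdered_of_lt hst htu huv, hs.1, hs.2, hu.1, hu.2, ht.1, ht.2, hv.1, hv.2⟩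

theorem shifted_double_intervals_cross_general (i j l m : ℕ)
    (hij : i < j) (hjl : j + 1 < l) (hlm : l ≤ m) :
    ¬ WeaklySeparated (Finset.Icc i (j - 1) ∪ Finset.Icc (l - 1) m)
        (Finset.Icc (i + 1) j ∪ Finset.Icc l (m + 1)) := by
  refine not_weaklySeparated_of_lt (s := i) (t := j) (u := l - 1) (v := m + 1)
    (by omega) (by omega) (by omega) ?_ ?_ ?_ ?_
    <;> simp only [Finset.mem_sdiff, Finset.mem_union, Finset.mem_Icc] <;> omega

theorem shifted_double_intervals_cross (n i j l m : ℕ)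
    (hi : 1 ≤ i) (hij : i < j) (hjl : j + 1 < l) (hlm : l ≤ m) (hmn : m < n) :
    ¬ WeaklySeparated (Finset.Icc i (j - 1) ∪ Finset.Icc (l - 1) m)
        (Finset.Icc (i + 1) j ∪ Finset.Icc l (m + 1)) :=
  shifted_double_intervals_cross_general i j l m hij hjl hlm
end
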